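/- arXiv:1708.05634 — 4 statements merged into one kernel-verified Lean document; each statement's English description precedes it below -/
import Mathlib

section
/- For every nonnegative integer n and every real u with |u| < 1, the polylogarithm of negative order -n satisfies Li_{-n}(u) = ∑_{k=0}^{n} k! · S(n+1, k+1) · (u/(1-u))^{k+1}, where S(n, k) denotes the Stirling number of the second kind; that is, ∑_{l=1}^{∞} l^n u^l = ∑_{k=0}^{n} k! · S(n+1, k+1) · (u/(1-u))^{k+1}. -/
/-!
Expanding `(l + 1) ^ n` in the binomial basis, `(l + 1) ^ n = ∑ k, k! S(n+1, k+1) (l choose k)`,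
reduces the series to the negative binomial series `∑ l, (l choose k) u ^ l = u ^ k / (1 - u) ^ (k + 1)`.
-/

/-- Stirling numbers of the second kind: `stirling2 n k` counts the partitions of an
`n`-element set into `k` nonempty blocks. -/
def stirling2 : ℕ → ℕ → ℕ
  | 0, 0 => 0 + 1
  | 0, _ + 1 => 0
  | _ + 1, 0 => 0
  | n + 1, k + 1 => (k + 1) * stirling2 n (k + 1) + stirling2 n k

open Finset Nat

theorem stirling2_eq_stirlingSecond : ∀ n k, stirling2 n k = stirlingSecond n k
  | 0, 0 | 0, _ + 1 | _ + 1, 0 => rfl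
  | n + 1, k + 1 => by
    rw [stirling2, stirlingSecond_succ_succ, stirling2_eq_stirlingSecond n (k + 1),
      stirling2_eq_stirlingSecond n k]

theorem Nat.add_one_pow_eq_sum_stirlingSecond_mul_choose (n m : ℕ) :
    (m + 1) ^ n = ∑ k ∈ range (n + 1), k ! * stirlingSecond (n + 1) (k + 1) * m.choose k := by
  induction n with
  | zero => simp [stirlingSecond_self]
  | succ n ih =>
    have top_vanishes : stirlingSecond (n + 1) (n + 2) = 0 :=
      stirlingSecond_eq_zero_of_lt (by omega)
    calc (m + 1) ^ (n + 1)
        = ∑ k ∈ range (n + 1),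
            (k + 1)! * stirlingSecond (n + 1) (k + 1) * (m.choose k + m.choose (k + 1)) := by
          rw [pow_succ', ih, mul_sum]
          refine sum_congr rfl fun k _ => ?_
          rw [mul_left_comm, add_one_mul_choose_eq, choose_succ_succ', factorial_succ]
          ring
      _ = ∑ k ∈ range (n + 2), (k + 1)! * stirlingSecond (n + 1) (k + 1) * m.choose k
            + ∑ k ∈ range (n + 2), k ! * stirlingSecond (n + 1) k * m.choose k := by
          rw [sum_range_succ _ (n + 1), sum_range_succ' _ (n + 1)]
          simp [top_vanishes, mul_add, sum_add_distrib]
      _ = ∑ k ∈ range (n + 2), k ! * stirlingSecond (n + 2) (k + 1) * m.choose k := by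
          rw [← sum_add_distrib]
          refine sum_congr rfl fun k _ => ?_
          rw [stirlingSecond_succ_succ (n + 1) k, factorial_succ]
          ring

theorem hasSum_choose_mul_pow {𝕜 : Type*} [NormedField 𝕜] [CompleteSpace 𝕜] {r : 𝕜}
    (hr : ‖r‖ < 1) (k : ℕ) :
    HasSum (fun m : ℕ => (m.choose k : 𝕜) * r ^ m) (r ^ k / (1 - r) ^ (k + 1)) := by
  have shifted : HasSum (fun m : ℕ => ((m + k).choose k : 𝕜) * r ^ (m + k))
      (r ^ k / (1 - r) ^ (k + 1)) := by
    simpa [pow_add, mul_comm, mul_assoc, mul_left_comm, div_eq_mul_inv] using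
      (hasSum_choose_mul_geometric_of_norm_lt_one k hr).mul_left (r ^ k)
  refine (hasSum_nat_add_iff' k).mp ?_
  rwa [sum_eq_zero fun i hi => by simp [choose_eq_zero_of_lt (mem_range.mp hi)], sub_zero]

/-- For every nonnegative integer `n` and real `u` with `|u| < 1`, the polylogarithm of
negative order `-n`, `Li_{-n}(u) = ∑_{l ≥ 1} l^n u^l`, equals
`∑_{k=0}^{n} k! ⬝ S(n+1, k+1) ⬝ (u/(1-u))^(k+1)`. -/
theorem polylog_neg_order_eq (n : ℕ) (u : ℝ) (hu : |u| < 1) :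
    ∑' l : ℕ, ((l : ℝ) + 1) ^ n * u ^ (l + 1)
      = ∑ k ∈ Finset.range (n + 1),
          (Nat.factorial k : ℝ) * (stirling2 (n + 1) (k + 1) : ℝ) * (u / (1 - u)) ^ (k + 1) := by
  have hu' : ‖u‖ < 1 := by rwa [Real.norm_eq_abs]
  have termwise := hasSum_sum fun k (_ : k ∈ range (n + 1)) =>
    (hasSum_choose_mul_pow hu' k).mul_left ((k ! : ℝ) * stirlingSecond (n + 1) (k + 1) * u)
  convert termwise.tsum_eq using 1
  · congr 1
    funext l
    rw [← cast_succ, ← cast_pow, add_one_pow_eq_sum_stirlingSecond_mul_choose, cast_sum,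
      sum_mul]
    refine sum_congr rfl fun k _ => ?_
    push_cast
    ring
  · refine sum_congr rfl fun k _ => ?_
    rw [stirling2_eq_stirlingSecond, div_pow, pow_succ u k]
    ring
end

section
/- Let θ > 0, let n ≥ 2, and let G_1, …, G_{n-1} be independent random variables where G_k is geometric on ℕ₀ with success probability k/(k+θ), i.e. P(G_k = m) = (k/(k+θ)) · (θ/(k+θ))^m for m ∈ ℕ₀. Set S_n = ∑_{k=1}^{n-1} G_k (the number of segregating sites in a sample of size n). Then for every positive integer i, the i-th cumulant of S_n equals ∑_{k=1}^{n-1} Li_{1-i}(θ/(k+θ)) = ∑_{b=1}^{i} S(i, b) · (b-1)! · θ^b · H_{n-1}^{(b)}, where S(i, b) is the Stirling number of the second kind and H_{n-1}^{(b)} = ∑_{k=1}^{n-1} 1/k^b is the generalized harmonic number. -/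
/-!
The number of segregating sites is a sum of independent geometric variables, so its cumulant
generating function is the sum of theirs. For `G` geometric with ratio `q = θ / (k + θ)`,
`K_G(t) = log (1 - q) - log (1 - q e^t) = log (1 - q) + Li_1(q e^t)` near `0`, and
`d/dt Li_s(q e^t) = Li_{s-1}(q e^t)`; hence the `i`-th cumulant is `∑_k Li_{1-i}(q_k)`.
Writing `(l + 1)^(i-1) = ∑_b S(i, b + 1) l^{(b)}` with falling factorials `l^{(b)}` and using
`∑_l l^{(b)} q^(l+1) = b! (q / (1 - q))^(b+1)` with `q / (1 - q) = θ / k` gives the form with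
generalized harmonic numbers.
-/

open MeasureTheory ProbabilityTheory

open Finset Real
open scoped Nat Topology

theorem stirling2_eq_stirlingSecond_s7 : stirling2 = Nat.stirlingSecond := by
  funext n k
  induction n generalizing k with
  | zero => cases k <;> rfl
  | succ n ih => cases k <;> simp [stirling2, Nat.stirlingSecond_succ_succ, ih]

namespace Nat

theorem mul_descFactorial_eq_descFactorial_succ_add (m k : ℕ) :
    m * m.descFactorial k = m.descFactorial (k + 1) + k * m.descFactorial k := by
  rcases le_or_gt k m with h | h
  · rw [descFactorial_succ, ← Nat.add_mul, Nat.sub_add_cancel h]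
  · simp [descFactorial_eq_zero_iff_lt.2 h]

theorem sum_stirlingSecond_mul_descFactorial (n m : ℕ) :
    ∑ k ∈ range (n + 1), stirlingSecond n k * m.descFactorial k = m ^ n := by
  induction n with
  | zero => simp
  | succ n ih =>
    have hshift : ∑ k ∈ range (n + 1), k * (stirlingSecond n k * m.descFactorial k)
        = ∑ k ∈ range (n + 1),
            (k + 1) * stirlingSecond n (k + 1) * m.descFactorial (k + 1) := by
      rw [sum_range_succ', sum_range_succ, stirlingSecond_eq_zero_of_lt (lt_succ_self n)]
      simp only [Nat.zero_mul, Nat.mul_zero, Nat.add_zero, Nat.mul_assoc]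
    rw [sum_range_succ', stirlingSecond_succ_zero, Nat.zero_mul, Nat.add_zero, pow_succ', ← ih,
      mul_sum]
    have hterm : ∀ k ∈ range (n + 1), m * (stirlingSecond n k * m.descFactorial k)
        = stirlingSecond n k * m.descFactorial (k + 1)
          + k * (stirlingSecond n k * m.descFactorial k) := by
      intro k _
      rw [mul_left_comm, mul_descFactorial_eq_descFactorial_succ_add]
      ring
    rw [sum_congr rfl hterm, sum_add_distrib, hshift, ← sum_add_distrib]
    refine sum_congr rfl fun k _ => ?_
    rw [stirlingSecond_succ_succ]
    ring

theorem succ_pow_eq_sum_stirlingSecond_mul_descFactorial (j l : ℕ) :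
    (l + 1) ^ j = ∑ b ∈ range (j + 1), stirlingSecond (j + 1) (b + 1) * l.descFactorial b := by
  have h := sum_stirlingSecond_mul_descFactorial (j + 1) (l + 1)
  rw [sum_range_succ', stirlingSecond_succ_zero, Nat.zero_mul, Nat.add_zero, pow_succ'] at h
  simp_rw [succ_descFactorial_succ, mul_left_comm _ (l + 1), ← mul_sum] at h
  exact (Nat.eq_of_mul_eq_mul_left (succ_pos l) h).symm

end Nat

theorem Finset.sum_Icc_one_eq_sum_range {M : Type*} [AddCommMonoid M] (f : ℕ → M) (m : ℕ) :
    ∑ k ∈ Icc 1 m, f k = ∑ k ∈ range m, f (k + 1) := by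
  rw [range_eq_Ico, sum_Ico_add' f 0 m 1, Ico_add_one_right_eq_Icc]

theorem hasSum_descFactorial_mul_geometric_succ (b : ℕ) {u : ℝ} (hu : |u| < 1) :
    HasSum (fun l : ℕ => (l.descFactorial b : ℝ) * u ^ (l + 1))
      (b ! * (u / (1 - u)) ^ (b + 1)) := by
  have h := (hasSum_choose_mul_geometric_of_norm_lt_one b (r := u)
    (by rwa [Real.norm_eq_abs])).mul_left (b ! * u ^ (b + 1))
  rw [← hasSum_nat_add_iff' b]
  have hzero : ∑ l ∈ range b, (l.descFactorial b : ℝ) * u ^ (l + 1) = 0 :=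
    sum_eq_zero fun l hl => by simp [Nat.descFactorial_eq_zero_iff_lt.2 (mem_range.1 hl)]
  have hterm : (fun l : ℕ => ((l + b).descFactorial b : ℝ) * u ^ (l + b + 1))
      = fun l => b ! * u ^ (b + 1) * ((l + b).choose b * u ^ l) := by
    ext l
    rw [Nat.descFactorial_eq_factorial_mul_choose]
    push_cast
    ring
  rw [hzero, sub_zero, hterm, div_pow, ← mul_one_div (u ^ (b + 1)), ← mul_assoc]
  exact h

/-- `polylog s u = Li_s(u) = ∑_{m ≥ 1} u^m / m^s` for integer order `s`; where the series
diverges, `tsum` makes it `0`. -/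
noncomputable def polylog (s : ℤ) (u : ℝ) : ℝ :=
  ∑' m : ℕ, u ^ (m + 1) / ((m : ℝ) + 1) ^ s

theorem polylog_one {u : ℝ} (hu : |u| < 1) : polylog 1 u = -log (1 - u) := by
  simpa [polylog] using (hasSum_pow_div_log_of_abs_lt_one hu).tsum_eq

theorem polylog_neg_natCast (j : ℕ) (u : ℝ) :
    polylog (-j) u = ∑' m : ℕ, ((m : ℝ) + 1) ^ j * u ^ (m + 1) := by
  simp [polylog, zpow_neg, div_eq_mul_inv, mul_comm]

theorem polylog_neg_natCast_eq_sum_stirlingSecond (j : ℕ) {u : ℝ} (hu : |u| < 1) :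
    polylog (-j) u = ∑ b ∈ range (j + 1),
      (Nat.stirlingSecond (j + 1) (b + 1) : ℝ) * b ! * (u / (1 - u)) ^ (b + 1) := by
  have hterm (m : ℕ) : ((m : ℝ) + 1) ^ j * u ^ (m + 1) = ∑ b ∈ range (j + 1),
      (Nat.stirlingSecond (j + 1) (b + 1) : ℝ) * ((m.descFactorial b : ℝ) * u ^ (m + 1)) := by
    rw [← Nat.cast_add_one, ← Nat.cast_pow,
      Nat.succ_pow_eq_sum_stirlingSecond_mul_descFactorial, Nat.cast_sum, sum_mul]
    push_cast
    exact sum_congr rfl fun b _ => by ring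
  have hsum (b : ℕ) := (hasSum_descFactorial_mul_geometric_succ b hu).mul_left
    (Nat.stirlingSecond (j + 1) (b + 1) : ℝ)
  rw [polylog_neg_natCast, tsum_congr hterm, (hasSum_sum fun b _ => hsum b).tsum_eq]
  exact sum_congr rfl fun b _ => by ring

theorem sum_polylog_neg_natCast_div_add {θ : ℝ} (hθ : 0 ≤ θ) (N j : ℕ) :
    ∑ k ∈ Icc 1 N, polylog (-j) (θ / (k + θ))
      = ∑ b ∈ Icc 1 (j + 1), (Nat.stirlingSecond (j + 1) b : ℝ) * (b - 1)! * θ ^ b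
          * ∑ k ∈ Icc 1 N, 1 / (k : ℝ) ^ b := by
  have hterm (k : ℕ) (hk : k ∈ Icc 1 N) : polylog (-j) (θ / (k + θ))
      = ∑ b ∈ range (j + 1),
          (Nat.stirlingSecond (j + 1) (b + 1) : ℝ) * b ! * (θ / k) ^ (b + 1) := by
    have hk0 : (0 : ℝ) < k := by exact_mod_cast (mem_Icc.1 hk).1
    have hratio : θ / (k + θ) / (1 - θ / (k + θ)) = θ / k := by
      rw [one_sub_div (by positivity), div_div_div_cancel_right₀ (by positivity),
        add_sub_cancel_right]
    rw [polylog_neg_natCast_eq_sum_stirlingSecond j, hratio]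
    rw [abs_of_nonneg (by positivity), div_lt_one (by positivity)]
    linarith
  rw [sum_congr rfl hterm, sum_comm, sum_Icc_one_eq_sum_range]
  refine sum_congr rfl fun b _ => ?_
  rw [Nat.add_sub_cancel, mul_sum]
  exact sum_congr rfl fun k _ => by ring

theorem norm_pow_succ_div_zpow_le {v ρ : ℝ} (hv : |v| ≤ ρ) (s : ℤ) (m : ℕ) :
    ‖v ^ (m + 1) / ((m : ℝ) + 1) ^ s‖ ≤ ρ ^ (m + 1) * ((m : ℝ) + 1) ^ (-s).toNat := by
  have hm : (1 : ℝ) ≤ (m : ℝ) + 1 := by simp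
  calc ‖v ^ (m + 1) / ((m : ℝ) + 1) ^ s‖ = |v| ^ (m + 1) * ((m : ℝ) + 1) ^ (-s) := by
        rw [norm_div, norm_pow, norm_zpow, Real.norm_eq_abs, Real.norm_of_nonneg (by positivity),
          div_eq_mul_inv, zpow_neg]
    _ ≤ ρ ^ (m + 1) * ((m : ℝ) + 1) ^ ((-s).toNat : ℤ) :=
        mul_le_mul (pow_le_pow_left₀ (abs_nonneg v) hv _)
          (zpow_le_zpow_right₀ hm (Int.self_le_toNat _)) (by positivity)
          (pow_nonneg ((abs_nonneg v).trans hv) _)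
    _ = ρ ^ (m + 1) * ((m : ℝ) + 1) ^ (-s).toNat := by rw [zpow_natCast]

theorem summable_pow_succ_mul_pow {ρ : ℝ} (hρ0 : 0 ≤ ρ) (hρ1 : ρ < 1) (N : ℕ) :
    Summable fun m : ℕ => ρ ^ (m + 1) * ((m : ℝ) + 1) ^ N := by
  have h := summable_pow_mul_geometric_of_norm_lt_one N (r := ρ) (by rwa [norm_of_nonneg hρ0])
  refine ((summable_nat_add_iff 1).2 h).congr fun m => ?_
  push_cast
  ring

theorem hasDerivAt_polylog_mul_exp (s : ℤ) {q t : ℝ} (ht : |q| * exp t < 1) :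
    HasDerivAt (fun x => polylog s (q * exp x)) (polylog (s - 1) (q * exp t)) t := by
  obtain ⟨a, ha, hat⟩ : ∃ a, |q| * exp a < 1 ∧ t < a :=
    ((eventually_nhdsWithin_of_eventually_nhds (s := Set.Ioi t)
      ((isOpen_lt (by fun_prop : Continuous fun x => |q| * exp x) continuous_const).mem_nhds
        ht)).and self_mem_nhdsWithin).exists
  have hbound : ∀ x ∈ Set.Iio a, |q * exp x| ≤ |q| * exp a := fun x hx => by
    rw [abs_mul, abs_exp]
    exact mul_le_mul_of_nonneg_left (exp_le_exp.2 (le_of_lt hx)) (abs_nonneg q)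
  have hρ0 : 0 ≤ |q| * exp a := by positivity
  refine hasDerivAt_tsum_of_isPreconnected
    (g := fun (m : ℕ) x => (q * exp x) ^ (m + 1) / ((m : ℝ) + 1) ^ s)
    (g' := fun (m : ℕ) x => (q * exp x) ^ (m + 1) / ((m : ℝ) + 1) ^ (s - 1))
    (summable_pow_succ_mul_pow hρ0 ha (-(s - 1)).toNat) isOpen_Iio isPreconnected_Iio
    (fun m x _ => ?_) (fun m x hx => norm_pow_succ_div_zpow_le (hbound x hx) _ m) hat
    ((summable_pow_succ_mul_pow hρ0 ha (-s).toNat).of_norm_bounded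
      (norm_pow_succ_div_zpow_le (hbound t hat) s)) hat
  have hm : (m : ℝ) + 1 ≠ 0 := by positivity
  refine ((((hasDerivAt_exp x).const_mul q).pow (m + 1)).div_const
    (((m : ℝ) + 1) ^ s)).congr_deriv ?_
  rw [zpow_sub_one₀ hm]
  push_cast
  field_simp
  ring

theorem iteratedDeriv_eqOn_of_hasDerivAt {𝕜 F : Type*} [NontriviallyNormedField 𝕜]
    [NormedAddCommGroup F] [NormedSpace 𝕜 F] {f : ℤ → 𝕜 → F} {V : Set 𝕜}
    (hV : IsOpen V) (hf : ∀ s, ∀ x ∈ V, HasDerivAt (f s) (f (s - 1) x) x) (k : ℕ) (s : ℤ) :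
    Set.EqOn (iteratedDeriv k (f s)) (f (s - k)) V := by
  induction k with
  | zero => simp [Set.EqOn]
  | succ k ih =>
    intro x hx
    rw [iteratedDeriv_succ, (Filter.eventuallyEq_of_mem (hV.mem_nhds hx) ih).deriv_eq,
      (hf _ x hx).deriv]
    push_cast
    ring_nf

section Measurability

variable {Ω : Type*} [MeasurableSpace Ω] {μ : Measure Ω}

/-- The measurable hulls of `s` and `sᶜ` cover the space and their masses add up to at most
`μ univ`, so they overlap in a null set. -/
theorem nullMeasurableSet_of_measure_add_measure_compl_le [IsFiniteMeasure μ] {s : Set Ω}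
    (h : μ s + μ sᶜ ≤ μ Set.univ) : NullMeasurableSet s μ := by
  set B := toMeasurable μ s
  set C := toMeasurable μ sᶜ
  have hBC : B ∪ C = Set.univ :=
    Set.eq_univ_of_univ_subset fun ω _ => (em (ω ∈ s)).imp (subset_toMeasurable μ s ·)
      (subset_toMeasurable μ sᶜ ·)
  have hinter : μ (B ∩ C) = 0 := by
    have key : μ Set.univ + μ (B ∩ C) = μ s + μ sᶜ := by
      rw [← hBC, measure_union_add_inter (μ := μ) B (measurableSet_toMeasurable μ sᶜ),
        measure_toMeasurable, measure_toMeasurable]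
    refine le_antisymm ((ENNReal.add_le_add_iff_left (measure_ne_top μ Set.univ)).1 ?_)
      (by positivity)
    rwa [add_zero, key]
  have hBs : B =ᵐ[μ] s := by
    refine ae_eq_set.2 ⟨?_, ?_⟩
    · exact measure_mono_null (show B \ s ⊆ B ∩ C from
        fun ω hω => ⟨hω.1, subset_toMeasurable μ sᶜ hω.2⟩) hinter
    · rw [Set.sdiff_eq_empty.2 (subset_toMeasurable μ s), measure_empty]
  exact (measurableSet_toMeasurable μ s).nullMeasurableSet.congr hBs

theorem aemeasurable_of_tsum_measure_preimage_singleton [IsFiniteMeasure μ] {α : Type*}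
    [MeasurableSpace α] [Countable α] [MeasurableSingletonClass α] {X : Ω → α}
    (h : ∑' a, μ (X ⁻¹' {a}) = μ Set.univ) : AEMeasurable X μ := by
  refine NullMeasurable.aemeasurable fun S _ => ?_
  have hle (T : Set α) : μ (X ⁻¹' T) ≤ ∑' a : T, μ (X ⁻¹' {(a : α)}) := by
    rw [← Set.biUnion_preimage_singleton]
    exact measure_biUnion_le μ T.to_countable _
  refine nullMeasurableSet_of_measure_add_measure_compl_le ?_
  calc μ (X ⁻¹' S) + μ (X ⁻¹' S)ᶜ
      ≤ ∑' a : S, μ (X ⁻¹' {(a : α)}) + ∑' a : ↥Sᶜ, μ (X ⁻¹' {(a : α)}) :=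
        add_le_add (hle S) (hle Sᶜ)
    _ = μ Set.univ := by
        rw [ENNReal.summable.tsum_add_tsum_compl (f := fun a => μ (X ⁻¹' {a}))
          ENNReal.summable, h]

end Measurability

namespace ProbabilityTheory

variable {Ω : Type*} [MeasurableSpace Ω] {μ : Measure Ω}

section

variable {p : unitInterval}

/-- `X` is not assumed measurable, so `μ {ω | X ω = n}` is an outer measure; a.e.-measurability
follows because these fibres exhaust the total mass. -/
theorem hasLaw_geometricMeasure [IsProbabilityMeasure μ] {X : Ω → ℕ} (hp : p ≠ 0)
    (hX : ∀ n, μ {ω | X ω = n} = ENNReal.ofReal ((1 - p) ^ n * p)) :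
    HasLaw X (geometricMeasure p) μ := by
  have hmeas : AEMeasurable X μ := by
    refine aemeasurable_of_tsum_measure_preimage_singleton ?_
    simp_rw [Set.preimage, Set.mem_singleton_iff, hX, measure_univ]
    rw [← ENNReal.ofReal_tsum_of_nonneg (geometricMeasure_nonneg p)
      (hasSum_one_geometricMeasure hp).summable, (hasSum_one_geometricMeasure hp).tsum_eq,
      ENNReal.ofReal_one]
  refine ⟨hmeas, Measure.ext_of_singleton fun n => ?_⟩
  rw [Measure.map_apply_of_aemeasurable hmeas (measurableSet_singleton n),
    geometricMeasure_singleton hp]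
  exact hX n

theorem hasSum_exp_mul_geometricMeasure {t : ℝ} (ht : (1 - p) * exp t < 1) :
    HasSum (fun n : ℕ => ((1 - p : ℝ) ^ n * p) * exp (t * n)) (p / (1 - (1 - p) * exp t)) := by
  have hr : 0 ≤ (1 - p : ℝ) * exp t := mul_nonneg (by simp [p.2.2]) (exp_pos t).le
  rw [div_eq_mul_inv]
  refine ((hasSum_geometric_of_lt_one hr ht).mul_left (p : ℝ)).congr_fun fun n => ?_
  rw [mul_pow, ← exp_nat_mul, mul_comm (n : ℝ)]
  ring

theorem integrable_exp_mul_geometricMeasure (hp : p ≠ 0) {t : ℝ} (ht : (1 - p) * exp t < 1) :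
    Integrable (fun n : ℕ => exp (t * n)) (geometricMeasure p) := by
  rw [integrable_geometricMeasure_iff hp]
  simpa [Real.norm_eq_abs] using (hasSum_exp_mul_geometricMeasure ht).summable

theorem integral_exp_mul_geometricMeasure (hp : p ≠ 0) {t : ℝ} (ht : (1 - p) * exp t < 1) :
    ∫ n, exp (t * n) ∂geometricMeasure p = p / (1 - (1 - p) * exp t) := by
  rw [integral_geometricMeasure hp]
  exact (hasSum_exp_mul_geometricMeasure ht).tsum_eq

variable {X : Ω → ℕ}

theorem HasLaw.integrable_exp_mul_of_geometricMeasure (hX : HasLaw X (geometricMeasure p) μ)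
    (hp : p ≠ 0) {t : ℝ} (ht : (1 - p) * exp t < 1) :
    Integrable (fun ω => exp (t * X ω)) μ := by
  have h := integrable_exp_mul_geometricMeasure hp ht
  rw [← hX.map_eq] at h
  exact (integrable_map_measure Measurable.of_discrete.aestronglyMeasurable hX.aemeasurable).1 h

theorem HasLaw.cgf_of_geometricMeasure (hX : HasLaw X (geometricMeasure p) μ)
    (hp : p ≠ 0) {t : ℝ} (ht : (1 - p) * exp t < 1) :
    cgf (fun ω => (X ω : ℝ)) μ t = log p + polylog 1 ((1 - p) * exp t) := by
  have hmgf : mgf (fun ω => (X ω : ℝ)) μ t = p / (1 - (1 - p) * exp t) :=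
    (hX.integral_comp Measurable.of_discrete.aestronglyMeasurable).trans
      (integral_exp_mul_geometricMeasure hp ht)
  have hr : 0 ≤ (1 - p : ℝ) * exp t := mul_nonneg (by simp [p.2.2]) (exp_pos t).le
  have hp0 : (p : ℝ) ≠ 0 := fun h => hp (Subtype.ext h)
  rw [cgf, hmgf, log_div hp0 (by linarith), polylog_one (by rwa [abs_of_nonneg hr]),
    sub_eq_add_neg]

end

theorem iIndepFun.iteratedDeriv_cgf_sum_of_geometricMeasure {ι : Type*} {X : ι → Ω → ℕ}
    (hindep : iIndepFun X μ) {p : ι → unitInterval}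
    (hp : ∀ i, p i ≠ 0) (hX : ∀ i, HasLaw (X i) (geometricMeasure (p i)) μ) (s : Finset ι)
    {j : ℕ} (hj : 0 < j) :
    iteratedDeriv j (cgf (fun ω => ∑ i ∈ s, (X i ω : ℝ)) μ) 0
      = ∑ i ∈ s, polylog (1 - j) (1 - p i) := by
  set V := ⋂ i ∈ s, {t : ℝ | (1 - p i) * exp t < 1}
  have hV : IsOpen V := isOpen_biInter_finset fun i _ =>
    isOpen_lt (by fun_prop) continuous_const
  have hq (i : ι) : 0 ≤ (1 - p i : ℝ) := by simp [(p i).2.2]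
  have h0V : (0 : ℝ) ∈ V := Set.mem_iInter₂.2 fun i _ => by
    simpa [unitInterval.pos_iff_ne_zero] using hp i
  have hcgf : cgf (fun ω => ∑ i ∈ s, (X i ω : ℝ)) μ =ᶠ[𝓝 0]
      fun t => ∑ i ∈ s, log (p i) + ∑ i ∈ s, polylog 1 ((1 - p i) * exp t) := by
    refine Filter.eventuallyEq_of_mem (hV.mem_nhds h0V) fun t ht => ?_
    have ht' (i : ι) (hi : i ∈ s) := Set.mem_iInter₂.1 ht i hi
    calc cgf (fun ω => ∑ i ∈ s, (X i ω : ℝ)) μ t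
        = cgf (∑ i ∈ s, ((↑) ∘ X i : Ω → ℝ)) μ t := by
          rw [Finset.sum_fn]
          rfl
      _ = ∑ i ∈ s, cgf ((↑) ∘ X i : Ω → ℝ) μ t :=
          (hindep.comp _ fun _ => Measurable.of_discrete).cgf_sum₀
            (fun i => Measurable.of_discrete.comp_aemeasurable (hX i).aemeasurable)
            fun i hi => (hX i).integrable_exp_mul_of_geometricMeasure (hp i) (ht' i hi)
      _ = _ := by
          rw [← sum_add_distrib]
          exact sum_congr rfl fun i hi => (hX i).cgf_of_geometricMeasure (hp i) (ht' i hi)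
  have hderiv (r : ℤ) : ∀ t ∈ V,
      HasDerivAt (fun t => ∑ i ∈ s, polylog r ((1 - p i) * exp t))
        (∑ i ∈ s, polylog (r - 1) ((1 - p i) * exp t)) t := fun t ht =>
    HasDerivAt.fun_sum fun i hi => hasDerivAt_polylog_mul_exp r
      (by rw [abs_of_nonneg (hq i)]; exact Set.mem_iInter₂.1 ht i hi)
  rw [hcgf.iteratedDeriv_eq, iteratedDeriv_const_add hj,
    iteratedDeriv_eqOn_of_hasDerivAt hV hderiv j 1 h0V]
  simp

end ProbabilityTheory

theorem segregating_sites_cumulants_general {Ω : Type*} [MeasurableSpace Ω] (μ : Measure Ω)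
    [IsProbabilityMeasure μ] (θ : ℝ) (hθ : 0 < θ) (n : ℕ)
    (G : ℕ → Ω → ℕ)
    (hindep : iIndepFun (fun k : Fin (n - 1) => G (k + 1)) μ)
    (hgeom : ∀ k : ℕ, 1 ≤ k → k ≤ n - 1 → ∀ m : ℕ,
      μ {ω | G k ω = m} = ENNReal.ofReal ((k / (k + θ)) * (θ / (k + θ)) ^ m))
    (i : ℕ) (hi : 1 ≤ i) :
    iteratedDeriv i
        (cgf (fun ω => ((∑ k ∈ Finset.Icc 1 (n - 1), G k ω : ℕ) : ℝ)) μ) 0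
      = ∑ k ∈ Finset.Icc 1 (n - 1),
          ∑' l : ℕ, ((l : ℝ) + 1) ^ (i - 1) * (θ / (k + θ)) ^ (l + 1)
    ∧ iteratedDeriv i
        (cgf (fun ω => ((∑ k ∈ Finset.Icc 1 (n - 1), G k ω : ℕ) : ℝ)) μ) 0
      = ∑ b ∈ Finset.Icc 1 i,
          (stirling2 i b : ℝ) * Nat.factorial (b - 1) * θ ^ b
            * ∑ k ∈ Finset.Icc 1 (n - 1), 1 / (k : ℝ) ^ b := by
  have hk (k : ℕ) : (0 : ℝ) < k + 1 + θ := by positivity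
  let p (k : ℕ) : unitInterval := ⟨(k + 1) / (k + 1 + θ), by positivity,
    div_le_one_of_le₀ (by linarith) (hk k).le⟩
  have hp (k : ℕ) : p k ≠ 0 :=
    unitInterval.pos_iff_ne_zero.1 (show (0 : ℝ) < (k + 1) / (k + 1 + θ) by positivity)
  have hq (k : ℕ) : 1 - (p k : ℝ) = θ / (k + 1 + θ) := by
    change 1 - (k + 1) / (k + 1 + θ) = θ / (k + 1 + θ)
    field_simp
    ring
  have hlaw (j : Fin (n - 1)) : HasLaw (G (j + 1)) (geometricMeasure (p j)) μ := by
    refine hasLaw_geometricMeasure (hp j) fun m => ?_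
    rw [hgeom (j + 1) (by omega) (by omega), hq, mul_comm]
    push_cast
    rfl
  have hcum : iteratedDeriv i
      (cgf (fun ω => ((∑ k ∈ Finset.Icc 1 (n - 1), G k ω : ℕ) : ℝ)) μ) 0
      = ∑ k ∈ Finset.Icc 1 (n - 1), polylog (1 - i) (θ / (k + θ)) := by
    have h := hindep.iteratedDeriv_cgf_sum_of_geometricMeasure (fun j => hp j) hlaw univ hi
    simp only [hq] at h
    simp only [Nat.cast_sum, sum_Icc_one_eq_sum_range, ← Fin.sum_univ_eq_sum_range]
    push_cast
    exact h
  obtain ⟨j, rfl⟩ : ∃ j, i = j + 1 := ⟨i - 1, by omega⟩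
  rw [show (1 : ℤ) - ↑(j + 1) = -↑j by push_cast; ring] at hcum
  refine ⟨hcum.trans (sum_congr rfl fun k _ => by simp [polylog_neg_natCast]), ?_⟩
  rw [hcum, sum_polylog_neg_natCast_div_add hθ.le, stirling2_eq_stirlingSecond_s7]

/-- Let `G_1, …, G_{n-1}` be independent, `G_k` geometric on `ℕ` with success probability
`k/(k+θ)`, and let `S_n = ∑_{k=1}^{n-1} G_k` be the number of segregating sites. Then for
every `i ≥ 1` the `i`-th cumulant of `S_n` equals
`∑_{k=1}^{n-1} Li_{1-i}(θ/(k+θ)) = ∑_{b=1}^{i} S(i,b) (b-1)! θ^b H_{n-1}^{(b)}`. -/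
theorem segregating_sites_cumulants {Ω : Type*} [MeasurableSpace Ω] (μ : Measure Ω)
    [IsProbabilityMeasure μ] (θ : ℝ) (hθ : 0 < θ) (n : ℕ) (hn : 2 ≤ n)
    (G : ℕ → Ω → ℕ)
    (hindep : iIndepFun (fun k : Fin (n - 1) => G (k + 1)) μ)
    (hgeom : ∀ k : ℕ, 1 ≤ k → k ≤ n - 1 → ∀ m : ℕ,
      μ {ω | G k ω = m} = ENNReal.ofReal ((k / (k + θ)) * (θ / (k + θ)) ^ m))
    (i : ℕ) (hi : 1 ≤ i) :
    iteratedDeriv i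
        (cgf (fun ω => ((∑ k ∈ Finset.Icc 1 (n - 1), G k ω : ℕ) : ℝ)) μ) 0
      = ∑ k ∈ Finset.Icc 1 (n - 1),
          ∑' l : ℕ, ((l : ℝ) + 1) ^ (i - 1) * (θ / (k + θ)) ^ (l + 1)
    ∧ iteratedDeriv i
        (cgf (fun ω => ((∑ k ∈ Finset.Icc 1 (n - 1), G k ω : ℕ) : ℝ)) μ) 0
      = ∑ b ∈ Finset.Icc 1 i,
          (stirling2 i b : ℝ) * Nat.factorial (b - 1) * θ ^ b
            * ∑ k ∈ Finset.Icc 1 (n - 1), 1 / (k : ℝ) ^ b :=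
  segregating_sites_cumulants_general μ θ hθ n G hindep hgeom i hi
end

section
/- Let θ > 0 and fix an integer i ≥ 3. Then, as n → ∞, (∑_{b=1}^{i} S(i, b) (b-1)! θ^b H_{n-1}^{(b)}) / (θ H_{n-1} + θ² H_{n-1}^{(2)})^{i/2} → 0; i.e., the i-th cumulant of the standardized number of segregating sites, (∑_{b=1}^{i} S(i,b)(b-1)! θ^b H_{n-1}^{(b)}) / (Var S_n)^{i/2}, tends to 0. Moreover this quantity is asymptotically equal to θ^{1-i/2} / (log n)^{(i-2)/2}. -/
/-!
`H_{n-1} = log n + O(1)`, while `H_{n-1}^{(b)}` stays bounded for `b ≥ 2`. Since `S(i, 1) = 1`,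
the cumulant is therefore `θ log n + o(log n)`, and so is the variance
`θ H_{n-1} + θ² H_{n-1}^{(2)}`; hence the standardized cumulant is asymptotic to
`θ log n / (θ log n)^{i/2}`, which tends to `0` when `i ≥ 3`.
-/

open Filter

open Asymptotics Topology Finset

lemma stirling2_one_right {n : ℕ} (hn : n ≠ 0) : stirling2 n 1 = 1 := by
  obtain ⟨m, rfl⟩ := Nat.exists_eq_succ_of_ne_zero hn
  induction m with
  | zero => rfl
  | succ m ih =>
    show 1 * stirling2 (m + 1) 1 + stirling2 (m + 1) 0 = 1
    rw [ih m.succ_ne_zero]; rfl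

lemma sum_Icc_one_div_eq_harmonic (n : ℕ) : ∑ k ∈ Icc 1 n, 1 / (k : ℝ) = harmonic n := by
  rw [harmonic_eq_sum_Icc]
  push_cast
  simp only [one_div]

lemma isEquivalent_sum_Icc_one_div_pred_log :
    (fun n : ℕ => ∑ k ∈ Icc 1 (n - 1), 1 / (k : ℝ)) ~[atTop] fun n => Real.log n := by
  have hγ : Tendsto (fun n : ℕ => ∑ k ∈ Icc 1 (n - 1), 1 / (k : ℝ) - Real.log n) atTop
      (𝓝 Real.eulerMascheroniConstant) := by
    refine (Real.tendsto_harmonic_sub_log_add_one.comp (tendsto_sub_atTop_nat 1)).congr' ?_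
    filter_upwards [eventually_ge_atTop 1] with n hn
    rw [Function.comp_apply, sum_Icc_one_div_eq_harmonic, Nat.cast_sub hn, Nat.cast_one,
      sub_add_cancel]
  exact hγ.isBigO_one ℝ |>.trans_isLittleO Real.isLittleO_const_log_atTop.natCast_atTop

lemma sum_Icc_one_div_pow_le_tsum {b : ℕ} (hb : 2 ≤ b) (n : ℕ) :
    ∑ k ∈ Icc 1 n, 1 / (k : ℝ) ^ b ≤ ∑' k : ℕ, 1 / (k : ℝ) ^ 2 :=
  calc ∑ k ∈ Icc 1 n, 1 / (k : ℝ) ^ b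
      ≤ ∑ k ∈ Icc 1 n, 1 / (k : ℝ) ^ 2 := by
        refine sum_le_sum fun k hk => ?_
        have hk : (1 : ℝ) ≤ k := by exact_mod_cast (mem_Icc.mp hk).1
        exact one_div_le_one_div_of_le (by positivity) (pow_le_pow_right₀ hk hb)
    _ ≤ ∑' k : ℕ, 1 / (k : ℝ) ^ 2 :=
        (Real.summable_one_div_nat_pow.mpr one_lt_two).sum_le_tsum _ fun k _ => by positivity

lemma isLittleO_sum_Icc_one_div_pow_log {b : ℕ} (hb : 2 ≤ b) (m : ℕ → ℕ) :
    (fun n => ∑ k ∈ Icc 1 (m n), 1 / (k : ℝ) ^ b) =o[atTop] fun n : ℕ => Real.log n := by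
  refine (isBigO_of_le (g := fun _ => ∑' k : ℕ, 1 / (k : ℝ) ^ 2) _ fun n => ?_)
    |>.trans_isLittleO Real.isLittleO_const_log_atTop.natCast_atTop
  rw [Real.norm_of_nonneg (sum_nonneg fun k _ => by positivity),
    Real.norm_of_nonneg (tsum_nonneg fun k => by positivity)]
  exact sum_Icc_one_div_pow_le_tsum hb _

lemma isEquivalent_const_mul_sum_Icc_one_div_pred_add {a : ℝ} (ha : a ≠ 0) {w : ℕ → ℝ}
    (hw : w =o[atTop] fun n => Real.log n) :
    (fun n : ℕ => a * ∑ k ∈ Icc 1 (n - 1), 1 / (k : ℝ) + w n) ~[atTop]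
      fun n => a * Real.log n :=
  (IsEquivalent.refl.mul isEquivalent_sum_Icc_one_div_pred_log).add_isLittleO
    ((isLittleO_const_mul_right_iff ha).mpr hw)

lemma isEquivalent_sum_mul_sum_Icc_one_div_pow {c : ℕ → ℝ} (hc : c 1 ≠ 0) {i : ℕ}
    (hi : 1 ≤ i) :
    (fun n : ℕ => ∑ b ∈ Icc 1 i, c b * ∑ k ∈ Icc 1 (n - 1), 1 / (k : ℝ) ^ b) ~[atTop]
      fun n => c 1 * Real.log n := by
  simp only [Icc_eq_cons_Ioc hi, sum_cons, pow_one]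
  refine isEquivalent_const_mul_sum_Icc_one_div_pred_add hc (IsLittleO.fun_sum fun b hb => ?_)
  exact (isLittleO_sum_Icc_one_div_pow_log (mem_Ioc.mp hb).1 _).const_mul_left (c b)

lemma isEquivalent_div_rpow_of_isEquivalent_const_mul {α : Type*} {l : Filter α}
    {u v L : α → ℝ} {θ : ℝ} (hθ : 0 < θ) (hL : 0 ≤ L) (hL_pos : ∀ᶠ x in l, 0 < L x)
    (hu : u ~[l] fun x => θ * L x) (hv : v ~[l] fun x => θ * L x) (p : ℝ) :
    (fun x => u x / v x ^ p) ~[l] fun x => θ ^ (1 - p) / L x ^ (p - 1) := by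
  refine (hu.div (hv.rpow fun x => mul_nonneg hθ.le (hL x))).congr_right ?_
  filter_upwards [hL_pos] with x hx
  simp only [Pi.div_apply, Pi.pow_apply]
  rw [Real.mul_rpow hθ.le hx.le, Real.rpow_sub hθ, Real.rpow_sub hx, Real.rpow_one, Real.rpow_one]
  field_simp

/-- For `θ > 0` and fixed `i ≥ 3`, the `i`-th cumulant of the standardized number of
segregating sites, `(∑_{b=1}^i S(i,b)(b-1)! θ^b H_{n-1}^{(b)})/(θ H_{n-1} + θ² H_{n-1}^{(2)})^{i/2}`,
tends to `0` as `n → ∞`, and is asymptotically equal to `θ^{1-i/2}/(log n)^{(i-2)/2}`. -/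
theorem standardized_cumulant_asymptotics (θ : ℝ) (hθ : 0 < θ) (i : ℕ) (hi : 3 ≤ i) :
    Tendsto
      (fun n : ℕ =>
        (∑ b ∈ Finset.Icc 1 i, (stirling2 i b : ℝ) * Nat.factorial (b - 1) * θ ^ b
            * ∑ k ∈ Finset.Icc 1 (n - 1), 1 / (k : ℝ) ^ b)
          / (θ * (∑ k ∈ Finset.Icc 1 (n - 1), 1 / (k : ℝ))
              + θ ^ 2 * ∑ k ∈ Finset.Icc 1 (n - 1), 1 / (k : ℝ) ^ 2) ^ ((i : ℝ) / 2))
      atTop (nhds 0)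
    ∧ Tendsto
      (fun n : ℕ =>
        ((∑ b ∈ Finset.Icc 1 i, (stirling2 i b : ℝ) * Nat.factorial (b - 1) * θ ^ b
            * ∑ k ∈ Finset.Icc 1 (n - 1), 1 / (k : ℝ) ^ b)
          / (θ * (∑ k ∈ Finset.Icc 1 (n - 1), 1 / (k : ℝ))
              + θ ^ 2 * ∑ k ∈ Finset.Icc 1 (n - 1), 1 / (k : ℝ) ^ 2) ^ ((i : ℝ) / 2))
          / (θ ^ (1 - (i : ℝ) / 2) / Real.log n ^ (((i : ℝ) - 2) / 2)))
      atTop (nhds 1) := by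
  have hi_half : (1 : ℝ) < (i : ℝ) / 2 := by
    rw [lt_div_iff₀ two_pos]; exact_mod_cast (by omega : 2 < i)
  have hc₁ : (stirling2 i 1 : ℝ) * Nat.factorial (1 - 1) * θ ^ 1 = θ := by
    simp [stirling2_one_right (by omega : i ≠ 0)]
  have hcumulant := isEquivalent_sum_mul_sum_Icc_one_div_pow
    (c := fun b => (stirling2 i b : ℝ) * Nat.factorial (b - 1) * θ ^ b) (i := i)
    (hc₁.symm ▸ hθ.ne') (by omega)
  simp only [hc₁] at hcumulant
  have hvariance := isEquivalent_const_mul_sum_Icc_one_div_pred_add hθ.ne'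
    ((isLittleO_sum_Icc_one_div_pow_log le_rfl (· - 1)).const_mul_left (θ ^ 2))
  have hlog_pos : ∀ᶠ n : ℕ in atTop, 0 < Real.log n :=
    (tendsto_natCast_atTop_atTop.eventually_gt_atTop 1).mono fun n hn => Real.log_pos hn
  have hstandardized := isEquivalent_div_rpow_of_isEquivalent_const_mul hθ
    (fun n : ℕ => Real.log_natCast_nonneg n) hlog_pos hcumulant hvariance ((i : ℝ) / 2)
  have hscale : Tendsto (fun n : ℕ => θ ^ (1 - (i : ℝ) / 2) / Real.log n ^ ((i : ℝ) / 2 - 1))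
      atTop (𝓝 0) :=
    tendsto_const_nhds.div_atTop <| (tendsto_rpow_atTop (by linarith)).comp <|
      Real.tendsto_log_atTop.comp tendsto_natCast_atTop_atTop
  rw [show ((i : ℝ) - 2) / 2 = (i : ℝ) / 2 - 1 by ring]
  refine ⟨hstandardized.symm.tendsto_nhds hscale,
    (isEquivalent_iff_tendsto_one ?_).mp hstandardized⟩
  filter_upwards [hlog_pos] with n hn
  positivity
end

section
/- Let θ > 0 and fix a positive integer i. Then, as n → ∞, κ_i,n := (∑_{b=1}^{i} S(i, b) (b-1)! θ^b H_{n-1}^{(b)}) / (θ H_{n-1})^i, which is the i-th cumulant of S_n/(θ H_{n-1}), converges to 1 if i = 1 and to 0 if i ≥ 2. -/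
/-!
Since `1 / k ^ b ≤ 1 / k` for `b ≥ 1`, every `H_{n-1}^{(b)}` is at most `H_{n-1}`, so the numerator
is `O(H_{n-1})` while the denominator is of order `H_{n-1}^i`, and `H_{n-1} → ∞` (divergence of the
harmonic series). For `i ≥ 2` the ratio therefore tends to `0`; for `i = 1` it is identically `1`
once `H_{n-1} ≠ 0`.
-/

open Filter

open Asymptotics

theorem tendsto_sum_Icc_one_div_atTop :
    Tendsto (fun n : ℕ => ∑ k ∈ Finset.Icc 1 n, 1 / (k : ℝ)) atTop atTop := by
  refine tendsto_atTop_mono (fun n => ?_)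
    (Real.tendsto_log_atTop.comp (tendsto_natCast_atTop_atTop.comp (tendsto_add_atTop_nat 1)))
  simpa [harmonic_eq_sum_Icc] using log_add_one_le_harmonic n

theorem sum_Icc_one_div_pow_le (n : ℕ) {b : ℕ} (hb : 1 ≤ b) :
    ∑ k ∈ Finset.Icc 1 n, 1 / (k : ℝ) ^ b ≤ ∑ k ∈ Finset.Icc 1 n, 1 / (k : ℝ) := by
  refine Finset.sum_le_sum fun k hk => ?_
  have hk1 : (1 : ℝ) ≤ k := by exact_mod_cast (Finset.mem_Icc.mp hk).1
  exact one_div_le_one_div_of_le (by positivity) (le_self_pow₀ hk1 (by omega))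

theorem tendsto_div_pow_nhds_zero_of_isBigO {α : Type*} {l : Filter α} {f g : α → ℝ} {i : ℕ}
    (hg : Tendsto g l atTop) (hfg : f =O[l] g) (hi : 1 < i) :
    Tendsto (fun x => f x / g x ^ i) l (nhds 0) := by
  have hlo : g =o[l] fun x => g x ^ i := by
    simpa [Function.comp_def] using (isLittleO_pow_pow_atTop_of_lt (𝕜 := ℝ) hi).comp_tendsto hg
  exact (hfg.trans_isLittleO hlo).tendsto_div_nhds_zero

/-- For `θ > 0` and a fixed positive integer `i`, the `i`-th cumulant of `S_n/(θ H_{n-1})`,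
namely `κ_{i,n} = (∑_{b=1}^i S(i,b)(b-1)! θ^b H_{n-1}^{(b)})/(θ H_{n-1})^i`, converges to
`1` if `i = 1` and to `0` if `i ≥ 2`, as `n → ∞`. -/
theorem rescaled_cumulant_limit (θ : ℝ) (hθ : 0 < θ) (i : ℕ) (hi : 1 ≤ i) :
    Tendsto
      (fun n : ℕ =>
        (∑ b ∈ Finset.Icc 1 i, (stirling2 i b : ℝ) * Nat.factorial (b - 1) * θ ^ b
            * ∑ k ∈ Finset.Icc 1 (n - 1), 1 / (k : ℝ) ^ b)
          / (θ * ∑ k ∈ Finset.Icc 1 (n - 1), 1 / (k : ℝ)) ^ i)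
      atTop (nhds (if i = 1 then 1 else 0)) := by
  set H : ℕ → ℝ := fun n => ∑ k ∈ Finset.Icc 1 (n - 1), 1 / (k : ℝ)
  have hH : Tendsto H atTop atTop :=
    tendsto_sum_Icc_one_div_atTop.comp (tendsto_sub_atTop_nat 1)
  rcases hi.eq_or_lt with rfl | hi_gt
  · refine tendsto_const_nhds.congr' ?_
    filter_upwards [hH.eventually_gt_atTop 0] with n hn
    have hS : stirling2 1 1 = 1 := rfl
    simp only [Finset.Icc_self, Finset.sum_singleton, hS, Nat.sub_self, Nat.factorial_zero,
      Nat.cast_one, one_mul, pow_one]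
    exact (div_self (mul_pos hθ hn).ne').symm
  · rw [if_neg hi_gt.ne']
    refine tendsto_div_pow_nhds_zero_of_isBigO (hH.const_mul_atTop hθ) ?_ hi_gt
    refine IsBigO.fun_sum fun b hb => IsBigO.const_mul_right hθ.ne' (IsBigO.const_mul_left ?_ _)
    refine IsBigO.of_norm_le fun n => ?_
    rw [Real.norm_of_nonneg (by positivity)]
    exact sum_Icc_one_div_pow_le _ (Finset.mem_Icc.mp hb).1
end
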